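/- Let F be a free group and W ⊆ F any subset. Define 𝓕(W) to be the set of nonempty reduced words in F no exact subword of which (i.e., no nonempty subword composed of whole syllables) belongs to W. Then every nonempty word w ∈ F admits a decomposition w = w₁⋯wₙ into exact subwords such that each wᵢ belongs to W ∪ 𝓕(W) and no two consecutive subwords wᵢ, wᵢ₊₁ both belong to 𝓕(W). -/

import Mathlib

/-!
By strong induction on the length of `w`. If `w` has no exact subword in `W`, it is
a one-piece decomposition. Otherwise write `w = a ++ v ++ b` where `v ∈ W` is the occurrence of
an element of `W` that ends first. Then no exact subword of `a` lies in `W`, so `a` is empty or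
lies in `𝓕(W)`; prepending `a` and `v` to a decomposition of the shorter word `b` works, because
`v ∉ 𝓕(W)` separates `a` from the first piece of `b`.
-/

/-- A word in the free group on `S`, presented as its list of syllables `(sᵢ, nᵢ)`
(standing for `sᵢ^{nᵢ}`), is reduced if consecutive syllables use distinct generators and
all exponents are nonzero. -/
def IsReducedWord {S : Type*} (w : List (S × ℤ)) : Prop :=
  w.Chain' (fun p q => p.1 ≠ q.1) ∧ ∀ p ∈ w, p.2 ≠ 0

/-- `𝓕(W)`: the set of nonempty words none of whose exact subwords (nonempty contiguous
blocks of syllables) belongs to `W`. -/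
def avoids {S : Type*} (W : Set (List (S × ℤ))) : Set (List (S × ℤ)) :=
  {u | u ≠ [] ∧ ∀ v : List (S × ℤ), v ≠ [] → v <:+: u → v ∉ W}

def IsDecomposition {S : Type*} (W : Set (List (S × ℤ)))
    (ws : List (List (S × ℤ))) (w : List (S × ℤ)) : Prop :=
  ws.flatten = w ∧ (∀ u ∈ ws, u ≠ []) ∧ (∀ u ∈ ws, u ∈ W ∪ avoids W) ∧
    ws.IsChain (fun u v => ¬(u ∈ avoids W ∧ v ∈ avoids W))

theorem List.exists_first_occurrence {α : Type*} {W : Set (List α)} {w : List α}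
    (h : ∃ v, v ≠ [] ∧ v <:+: w ∧ v ∈ W) :
    ∃ a v b, a ++ v ++ b = w ∧ v ≠ [] ∧ v ∈ W ∧ ∀ u, u ≠ [] → u <:+: a → u ∉ W := by
  classical
  have hend : ∃ m, ∃ a v b, a ++ v ++ b = w ∧ v ≠ [] ∧ v ∈ W ∧ (a ++ v).length = m := by
    obtain ⟨v, hv, ⟨a, b, rfl⟩, hvW⟩ := h
    exact ⟨_, a, v, b, rfl, hv, hvW, rfl⟩
  obtain ⟨a, v, b, rfl, hv, hvW, hm⟩ := Nat.find_spec hend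
  refine ⟨a, v, b, rfl, hv, hvW, ?_⟩
  rintro u hu ⟨a₁, a₂, rfl⟩ huW
  have hmin := Nat.find_min' hend ⟨a₁, u, a₂ ++ v ++ b, by simp, hu, huW, rfl⟩
  have hv_pos := List.length_pos_iff.mpr hv
  simp only [List.length_append] at hm hmin
  omega

section

variable {S : Type*} {W : Set (List (S × ℤ))}

theorem notMem_avoids_of_mem {v : List (S × ℤ)} (hv : v ≠ []) (hvW : v ∈ W) :
    v ∉ avoids W :=
  fun h => h.2 v hv (List.infix_refl v) hvW

namespace IsDecomposition

theorem nil : IsDecomposition W [] [] :=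
  ⟨rfl, by simp, by simp, List.isChain_nil⟩

theorem cons {u w : List (S × ℤ)} {ws : List (List (S × ℤ))} (hu : u ≠ [])
    (huW : u ∈ W ∪ avoids W) (hhead : ∀ v ∈ ws.head?, ¬(u ∈ avoids W ∧ v ∈ avoids W))
    (hws : IsDecomposition W ws w) :
    IsDecomposition W (u :: ws) (u ++ w) := by
  obtain ⟨hflat, hne, hmem, hchain⟩ := hws
  refine ⟨by simp [hflat], ?_, ?_, List.isChain_cons.mpr ⟨hhead, hchain⟩⟩
  · simpa using ⟨hu, hne⟩
  · simpa using ⟨huW, hmem⟩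

end IsDecomposition

open IsDecomposition in
theorem exists_isDecomposition (w : List (S × ℤ)) : ∃ ws, IsDecomposition W ws w := by
  by_cases hw : w = []
  · exact ⟨[], hw ▸ nil⟩
  by_cases hav : w ∈ avoids W
  · exact ⟨[w], by simpa using cons hw (Or.inr hav) (by simp) nil⟩
  have hocc : ∃ v, v ≠ [] ∧ v <:+: w ∧ v ∈ W := by
    simpa [avoids, hw] using hav
  obtain ⟨a, v, b, rfl, hv, hvW, ha⟩ := List.exists_first_occurrence hocc
  have hshorter : b.length < (a ++ v ++ b).length := by
    have hv_pos := List.length_pos_iff.mpr hv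
    simp only [List.length_append]
    omega
  obtain ⟨ws, hb⟩ := exists_isDecomposition b
  have hvnot := notMem_avoids_of_mem hv hvW
  have hvb : IsDecomposition W (v :: ws) (v ++ b) :=
    cons hv (Or.inl hvW) (fun _ _ h => hvnot h.1) hb
  rcases eq_or_ne a [] with rfl | ha_ne
  · exact ⟨v :: ws, by simpa using hvb⟩
  · refine ⟨a :: v :: ws, List.append_assoc a v b ▸ cons ha_ne (Or.inr ⟨ha_ne, ha⟩) ?_ hvb⟩
    simp [hvnot]
termination_by w.length

end

theorem stmt_0 {S : Type*}
    (W : Set (List (S × ℤ))) (w : List (S × ℤ)) :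
    ∃ ws : List (List (S × ℤ)), ws.flatten = w ∧ (∀ u ∈ ws, u ≠ []) ∧
      (∀ u ∈ ws, u ∈ W ∪ avoids W) ∧
      ws.Chain' (fun u v => ¬(u ∈ avoids W ∧ v ∈ avoids W)) :=
  exists_isDecomposition w
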